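/- Let p ∈ NC(n) and suppose 1 ∼_p k for some 1 < k ≤ n. Then every block of p other than the block containing 1 is contained either in {1,…,k−1} or in {k,…,n}, and every block of the Kreweras complement K(p) is contained either in {1,…,k−1} or in {k,…,n}. -/

import Mathlib

namespace NCPaper

/-- The index set `[n] = {1, …, n}` inside `ℕ`. -/
def Idx (n : ℕ) : Set ℕ := Set.Icc 1 n

/-- `r` is (the equivalence relation of) a partition of the set `S`:
a symmetric, transitive relation on `ℕ` whose domain is exactly `S`.
For `S ⊆ [n]` this encodes a partial partition of `[n]` with support `S`;
its blocks are the equivalence classes. -/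
def IsPartitionOn (S : Set ℕ) (r : ℕ → ℕ → Prop) : Prop :=
  (∀ i j, r i j → r j i) ∧ (∀ i j k, r i j → r j k → r i k) ∧ (∀ i, r i i ↔ i ∈ S)

/-- A partition (relation) is non-crossing if there are no `i < j < k < l`
with `i ∼ k`, `j ∼ l` and `i ≁ j`. -/
def NonCrossing (r : ℕ → ℕ → Prop) : Prop :=
  ∀ i j k l, i < j → j < k → k < l → r i k → r j l → r i j

/-- Refinement order on partitions encoded as relations:
`r ≤ s` iff every block of `r` is contained in a block of `s`. -/
def RelLE (r s : ℕ → ℕ → Prop) : Prop := ∀ i j, r i j → s i j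

/-- Join of two partial partitions with complementary (disjoint) supports:
the partition whose blocks are the blocks of `r` together with those of `s`. -/
def relJoin (r s : ℕ → ℕ → Prop) : ℕ → ℕ → Prop := fun i j => r i j ∨ s i j

/-- `k` lies (weakly) between `i` and `j`, i.e. `k ∈ {min i j, …, max i j}`. -/
def Between (i j k : ℕ) : Prop := min i j ≤ k ∧ k ≤ max i j

/-- The Kreweras complement `kr(r, S)` of the partial partition `(r, S)` of `[n]`:
the relation with support `[n] \ S` in which `i ∼ j` iff no element `k` of
`{i,…,j} ∩ S` is `r`-equivalent to an element `l` of `S \ {i,…,j}`. -/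
def krRel (n : ℕ) (S : Set ℕ) (r : ℕ → ℕ → Prop) : ℕ → ℕ → Prop :=
  fun i j => i ∈ Idx n ∧ j ∈ Idx n ∧ i ∉ S ∧ j ∉ S ∧
    ∀ k l, k ∈ S → l ∈ S → Between i j k → ¬ Between i j l → ¬ r k l

/-- Transport of a relation along a map. -/
def mapRel (f : ℕ → ℕ) (r : ℕ → ℕ → Prop) : ℕ → ℕ → Prop :=
  fun a b => ∃ i j, f i = a ∧ f j = b ∧ r i j

/-- `i ↦ 2i - δ(i)` where `δ(i) = 1` for odd `i` and `δ(i) = 0` for even `i`;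
this maps `[2k]` onto `S = {1,4,5,8,…,4k-3,4k} ⊆ [4k]`. -/
def fS (i : ℕ) : ℕ := 2 * i - i % 2

/-- `i ↦ 2i - (1 - δ(i))`; this maps `[2k]` onto `Sᶜ = {2,3,6,7,…} ⊆ [4k]`. -/
def fSc (i : ℕ) : ℕ := 2 * i - (1 - i % 2)

/-- The nested Kreweras complement `kr′(π)` of a partition `π` of `[2k]`:
transport `π` along `fS` to a partial partition of `[4k]` with support
`fS '' [2k]`, take its Kreweras complement and transport back along `fSc`. -/
def krNested (k : ℕ) (r : ℕ → ℕ → Prop) : ℕ → ℕ → Prop :=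
  fun i j => krRel (4 * k) (fS '' Idx (2 * k)) (mapRel fS r) (fSc i) (fSc j)

/-- `π₀`: the partition of `[2k]` with blocks `{2i, 2i+1}`, indices mod `2k`
(so one block is `{2k, 1}`). -/
def piZero (k : ℕ) : ℕ → ℕ → Prop := fun i j =>
  i ∈ Idx (2 * k) ∧ j ∈ Idx (2 * k) ∧
    (i = j ∨ (Even i ∧ j = i + 1) ∨ (Even j ∧ i = j + 1) ∨
      (i = 1 ∧ j = 2 * k) ∨ (j = 1 ∧ i = 2 * k))

/-- `π₁`: the partition of `[2k]` with blocks `{2i-1, 2i}`, `1 ≤ i ≤ k`. -/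
def piOne (k : ℕ) : ℕ → ℕ → Prop := fun i j =>
  i ∈ Idx (2 * k) ∧ j ∈ Idx (2 * k) ∧
    (i = j ∨ (Odd i ∧ j = i + 1) ∨ (Odd j ∧ i = j + 1))

/-- The `i`-th odd position `2i - 1` in `[2n]`. -/
def oddPos (i : ℕ) : ℕ := 2 * i - 1

/-- The `i`-th even position `2i` in `[2n]`. -/
def evenPos (i : ℕ) : ℕ := 2 * i

/-- The Kreweras complement `K(p)` of a partition `p` of `[n]`: transport `p`
along `i ↦ 2i-1` to the odd positions `σ = {1,3,…,2n-1}` of `[2n]`, take the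
Kreweras complement there, and transport back along `i ↦ 2i`. -/
def Kmap (n : ℕ) (r : ℕ → ℕ → Prop) : ℕ → ℕ → Prop :=
  fun i j => krRel (2 * n) (oddPos '' Idx n) (mapRel oddPos r) (evenPos i) (evenPos j)

/-- `p° = (p̂,σ) ∨ (K̂(p),σᶜ)`: the partition of `[2n]` obtained by placing `p`
on the odd positions and `K(p)` on the even positions. -/
def pCirc (n : ℕ) (p : ℕ → ℕ → Prop) : ℕ → ℕ → Prop :=
  relJoin (mapRel oddPos p) (mapRel evenPos (Kmap n p))

/-- `F(π)` for `π ≥ π₀`: `i ∼ j` iff `2i-1 ∼_π 2j-1`. -/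
def Fmap (r : ℕ → ℕ → Prop) : ℕ → ℕ → Prop := fun i j => r (2 * i - 1) (2 * j - 1)

/-- `G(π)` for `π ≥ π₁`: `i ∼ j` iff `2i ∼_π 2j`. -/
def Gmap (r : ℕ → ℕ → Prop) : ℕ → ℕ → Prop := fun i j => r (2 * i) (2 * j)

/-- `B` is a block of the partition (relation) `r`. -/
def IsBlock (r : ℕ → ℕ → Prop) (B : Set ℕ) : Prop := ∃ i, r i i ∧ B = {j | r i j}

/-- The number `|r|` of blocks of the partition `r`. -/
noncomputable def numBlocks (r : ℕ → ℕ → Prop) : ℕ := {B : Set ℕ | IsBlock r B}.ncard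

/-- `B' ⪯ B` for `B = {i₁<…<i_t}`, `B' = {j₁<…<j_{t'}}`: `i₁ < j₁` and `j_{t'} < i_t`. -/
def Nested (B' B : Set ℕ) : Prop := sInf B < sInf B' ∧ sSup B' < sSup B

/-- The depth `d_p(B)` of a block `B`: the maximal number `m` of blocks in a
chain `B = X₁ ⪯ X₂ ⪯ … ⪯ X_m` of blocks of `p`. -/
noncomputable def depth (p : ℕ → ℕ → Prop) (B : Set ℕ) : ℕ :=
  sSup {m : ℕ | ∃ c : ℕ → Set ℕ, c 1 = B ∧
    (∀ i, 1 ≤ i → i ≤ m → IsBlock p (c i)) ∧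
    (∀ i, 1 ≤ i → i < m → Nested (c i) (c (i + 1)))}

/-- `p_{B,B'}`: the partition obtained from `p` by merging the blocks `B` and `B'`. -/
def mergeRel (p : ℕ → ℕ → Prop) (B B' : Set ℕ) : ℕ → ℕ → Prop :=
  fun i j => p i j ∨ (p i i ∧ p j j ∧ i ∈ B ∪ B' ∧ j ∈ B ∪ B')

/-- Two distinct blocks `B, B'` of `p` are adjacent if replacing them by
`B ∪ B'` yields a non-crossing partition. -/
def Adjacent (p : ℕ → ℕ → Prop) (B B' : Set ℕ) : Prop :=
  IsBlock p B ∧ IsBlock p B' ∧ B ≠ B' ∧ NonCrossing (mergeRel p B B')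

/-- The set of the `i` smallest elements of `B`. -/
def lowerPart (B : Set ℕ) (i : ℕ) : Set ℕ := {x ∈ B | (B ∩ Set.Iic x).ncard ≤ i}

/-- The set of the remaining elements of `B` (all but the `i` smallest). -/
def upperPart (B : Set ℕ) (i : ℕ) : Set ℕ := {x ∈ B | i < (B ∩ Set.Iic x).ncard}

/-- `p_{B,i}`: the partition obtained from `p` by splitting the block `B` into
the block of its `i` smallest elements and the block of its remaining elements. -/
def splitRel (p : ℕ → ℕ → Prop) (B : Set ℕ) (i : ℕ) : ℕ → ℕ → Prop :=
  fun x y => p x y ∧ ((x ∈ lowerPart B i ∧ y ∈ lowerPart B i) ∨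
    (x ∈ upperPart B i ∧ y ∈ upperPart B i) ∨ (x ∉ B ∧ y ∉ B))

/-- The `i`-th smallest element of `B` (1-indexed). -/
noncomputable def nthSmall (B : Set ℕ) (i : ℕ) : ℕ :=
  sInf {x | x ∈ B ∧ (B ∩ Set.Iic x).ncard = i}

theorem IsPartitionOn.symm {S : Set ℕ} {p : ℕ → ℕ → Prop} (hp : IsPartitionOn S p) {i j : ℕ}
    (h : p i j) : p j i :=
  hp.1 i j h

theorem IsPartitionOn.trans {S : Set ℕ} {p : ℕ → ℕ → Prop} (hp : IsPartitionOn S p) {i j k : ℕ}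
    (hij : p i j) (hjk : p j k) : p i k :=
  hp.2.1 i j k hij hjk

theorem IsPartitionOn.mem_right {S : Set ℕ} {p : ℕ → ℕ → Prop} (hp : IsPartitionOn S p)
    {i j : ℕ} (h : p i j) : j ∈ S :=
  (hp.2.2 j).1 (hp.trans (hp.symm h) h)

theorem IsPartitionOn.mem_left {S : Set ℕ} {p : ℕ → ℕ → Prop} (hp : IsPartitionOn S p)
    {i j : ℕ} (h : p i j) : i ∈ S :=
  hp.mem_right (hp.symm h)

theorem IsPartitionOn.lt_iff_lt_of_not_rel {S : Set ℕ} {p : ℕ → ℕ → Prop}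
    (hp : IsPartitionOn S p) (hnc : NonCrossing p) {i k a b : ℕ} (hik : p i k) (hab : p a b)
    (hia : i < a) (hib : i < b) (hni : ¬ p i a) : a < k ↔ b < k := by
  have hstraddle : ∀ {x y}, p x y → i < x → x < k → k ≤ y → p i x := by
    intro x y hxy hix hxk hky
    rcases hky.eq_or_lt with rfl | hky
    · exact hp.trans hik (hp.symm hxy)
    · exact hnc i x k y hix hxk hky hik hxy
  constructor
  · intro hak
    by_contra! hkb
    exact hni (hstraddle hab hia hak hkb)
  · intro hbk
    by_contra! hka
    exact hni (hp.trans (hstraddle (hp.symm hab) hib hbk hka) (hp.symm hab))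

theorem Kmap.mem_Idx {n : ℕ} {p : ℕ → ℕ → Prop} {a b : ℕ} (h : Kmap n p a b) :
    a ∈ Idx n ∧ b ∈ Idx n := by
  obtain ⟨ha, hb, -⟩ := h
  simp only [Idx, evenPos, Set.mem_Icc] at ha hb ⊢
  omega

/- The Kreweras complement does not cross `p`: the arc from `2a` to `2b` of `K(p)`, placed on the
even positions, would separate the odd positions `2i-1` and `2k-1` of the `p`-related `i` and `k`. -/
theorem Kmap.lt_iff_lt_of_rel {n : ℕ} {p : ℕ → ℕ → Prop} {a b i k : ℕ} (h : Kmap n p a b)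
    (hi : i ∈ Idx n) (hk : k ∈ Idx n) (hki : p k i) (hia : i ≤ min a b) : a < k ↔ b < k := by
  obtain ⟨-, -, -, -, hkr⟩ := h
  have hi1 : 1 ≤ i := hi.1
  by_contra hne
  refine hkr (oddPos k) (oddPos i) ⟨k, hk, rfl⟩ ⟨i, hi, rfl⟩ ?_ ?_ ⟨k, i, rfl, rfl, hki⟩
  · simp only [Between, oddPos, evenPos]
    omega
  · simp only [Between, oddPos, evenPos]
    omega

theorem subset_Icc_or_subset_Icc_of_lt_iff_lt {B : Set ℕ} {n k : ℕ} (hB : B ⊆ Set.Icc 1 n)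
    (h : ∀ a ∈ B, ∀ b ∈ B, (a < k ↔ b < k)) : B ⊆ Set.Icc 1 (k - 1) ∨ B ⊆ Set.Icc k n := by
  by_cases hlow : ∃ a ∈ B, a < k
  · obtain ⟨a, ha, hak⟩ := hlow
    refine Or.inl fun b hb => ?_
    have := hB hb
    have := (h a ha b hb).1 hak
    simp only [Set.mem_Icc] at *
    omega
  · push Not at hlow
    refine Or.inr fun b hb => ?_
    have := hB hb
    have := hlow b hb
    simp only [Set.mem_Icc] at *
    omega

theorem blocks_localize_of_one_rel_general
    (n : ℕ) (p : ℕ → ℕ → Prop)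
    (hp : IsPartitionOn (Idx n) p) (hnc : NonCrossing p)
    (k : ℕ) (h1k : p 1 k) :
    (∀ B : Set ℕ, IsBlock p B → 1 ∉ B →
      B ⊆ Set.Icc 1 (k - 1) ∨ B ⊆ Set.Icc k n) ∧
    (∀ C : Set ℕ, IsBlock (Kmap n p) C →
      C ⊆ Set.Icc 1 (k - 1) ∨ C ⊆ Set.Icc k n) := by
  refine ⟨?_, ?_⟩
  · rintro B ⟨c, -, rfl⟩ h1B
    have hpos : ∀ {j}, p c j → 1 < j := fun hj =>
      lt_of_le_of_ne (hp.mem_right hj).1 (by rintro rfl; exact h1B hj)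
    exact subset_Icc_or_subset_Icc_of_lt_iff_lt (fun j hj => hp.mem_right hj) fun a ha b hb =>
      hp.lt_iff_lt_of_not_rel hnc h1k (hp.trans (hp.symm ha) hb) (hpos ha) (hpos hb)
        fun h1a => h1B (hp.trans ha (hp.symm h1a))
  · rintro C ⟨c, -, rfl⟩
    have hside : ∀ {j}, Kmap n p c j → (c < k ↔ j < k) := fun hj =>
      hj.lt_iff_lt_of_rel (hp.mem_left h1k) (hp.mem_right h1k) (hp.symm h1k)
        (le_min (Kmap.mem_Idx hj).1.1 (Kmap.mem_Idx hj).2.1)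
    exact subset_Icc_or_subset_Icc_of_lt_iff_lt (fun j hj => (Kmap.mem_Idx hj).2)
      fun a ha b hb => (hside ha).symm.trans (hside hb)

/-- if `1 ∼_p k` in `p ∈ NC(n)` with `1 < k ≤ n`, then every
block of `p` not containing `1` is contained in `{1,…,k-1}` or in `{k,…,n}`,
and every block of `K(p)` is contained in `{1,…,k-1}` or in `{k,…,n}`. -/
theorem blocks_localize_of_one_rel
    (n : ℕ) (p : ℕ → ℕ → Prop)
    (hp : IsPartitionOn (Idx n) p) (hnc : NonCrossing p)
    (k : ℕ) (hk1 : 1 < k) (hkn : k ≤ n) (h1k : p 1 k) :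
    (∀ B : Set ℕ, IsBlock p B → 1 ∉ B →
      B ⊆ Set.Icc 1 (k - 1) ∨ B ⊆ Set.Icc k n) ∧
    (∀ C : Set ℕ, IsBlock (Kmap n p) C →
      C ⊆ Set.Icc 1 (k - 1) ∨ C ⊆ Set.Icc k n) :=
  blocks_localize_of_one_rel_general n p hp hnc k h1k

end NCPaper
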